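/- Let G = (V, E; w) be a graph with strictly positive edge weights. If the matching game Γ_G admits a PMAS, then G contains no induced path P_5 and no induced cycle C_5. Equivalently, there do not exist distinct vertices 1, 2, 3, 4, 5 such that the edge set of the induced subgraph on {1,...,5} contains {12, 23, 34, 45} and is contained in {12, 23, 34, 45, 15}. -/

import Mathlib

open Finset

/-- `M` is a matching of the induced subgraph `G[S]`, given as a finite set of
(ordered representatives of) edges with endpoints in `S`, pairwise vertex-disjoint. -/
def IsMatchingIn {V : Type*} (G : SimpleGraph V) (S : Finset V)
    (M : Finset (V × V)) : Prop :=
  (∀ p ∈ M, G.Adj p.1 p.2 ∧ p.1 ∈ S ∧ p.2 ∈ S) ∧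
  (∀ p ∈ M, ∀ q ∈ M, p ≠ q →
    p.1 ≠ q.1 ∧ p.1 ≠ q.2 ∧ p.2 ≠ q.1 ∧ p.2 ≠ q.2)

/-- `r` is the maximum total weight of a matching in the induced subgraph `G[S]`. -/
def IsMaxMatchingWeight {V : Type*} (G : SimpleGraph V)
    (w : V → V → ℝ) (S : Finset V) (r : ℝ) : Prop :=
  (∃ M : Finset (V × V), IsMatchingIn G S M ∧ ∑ p ∈ M, w p.1 p.2 = r) ∧
  (∀ M : Finset (V × V), IsMatchingIn G S M → ∑ p ∈ M, w p.1 p.2 ≤ r)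

/-- A population monotonic allocation scheme (PMAS): `x S i` is the payoff of player `i`
in coalition `S`.  Efficiency holds for every nonempty coalition, and every player's
payoff is monotone under coalition inclusion. -/
def IsPMAS {N : Type*} [DecidableEq N] (γ : Finset N → ℝ)
    (x : Finset N → N → ℝ) : Prop :=
  (∀ S : Finset N, S.Nonempty → ∑ i ∈ S, x S i = γ S) ∧
  (∀ S T : Finset N, S ⊆ T → ∀ i ∈ S, x S i ≤ x T i)

/-! A PMAS pays each player of a coalition at most its marginal contribution to any larger
coalition. For the middle edge `23` of a path `1-2-3-4` this bounds
`γ{2,3} = x{2,3}(2) + x{2,3}(3)` by `(γ{2,3,4} - γ{3,4}) + (γ{1,2,3} - γ{1,2})`. As `γ` of a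
set `{i, j, k}` without the edge `ik` is `max γ{i,j} γ{j,k}`, and all edge weights are positive,
this forces `γ{2,3}` to exceed both `γ{1,2}` and `γ{3,4}`. The same argument for the path
`2-3-4-5` forces `γ{3,4} > γ{2,3}`. -/

namespace IsMatchingIn

variable {V : Type*} {G : SimpleGraph V} {S T : Finset V} {M : Finset (V × V)}

theorem mono (hM : IsMatchingIn G S M) (hST : S ⊆ T) : IsMatchingIn G T M :=
  ⟨fun p hp => (hM.1 p hp).imp_right fun h => ⟨hST h.1, hST h.2⟩, hM.2⟩

theorem empty : IsMatchingIn G S ∅ := by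
  simp [IsMatchingIn]

theorem singleton {i j : V} (hij : G.Adj i j) (hi : i ∈ S) (hj : j ∈ S) :
    IsMatchingIn G S {(i, j)} := by
  simp_all [IsMatchingIn]

theorem subsingleton_of_forall_incident (hM : IsMatchingIn G S M) {j : V}
    (hj : ∀ p ∈ M, p.1 = j ∨ p.2 = j) : (M : Set (V × V)).Subsingleton := by
  intro p hp q hq
  by_contra hpq
  have := hM.2 p hp q hq hpq
  rcases hj p hp with h | h <;> rcases hj q hq with h' | h' <;> simp_all

end IsMatchingIn

namespace IsMaxMatchingWeight

variable {V : Type*} {G : SimpleGraph V} {w : V → V → ℝ} {S T : Finset V} {r s : ℝ}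

theorem le_of_isMatchingIn (h : IsMaxMatchingWeight G w S r) {M : Finset (V × V)}
    (hM : IsMatchingIn G S M) : ∑ p ∈ M, w p.1 p.2 ≤ r :=
  h.2 M hM

theorem nonneg (h : IsMaxMatchingWeight G w S r) : 0 ≤ r := by
  simpa using h.le_of_isMatchingIn IsMatchingIn.empty

theorem le_of_adj (h : IsMaxMatchingWeight G w S r) {i j : V} (hij : G.Adj i j)
    (hi : i ∈ S) (hj : j ∈ S) : w i j ≤ r := by
  simpa using h.le_of_isMatchingIn (IsMatchingIn.singleton hij hi hj)

theorem le_of_subset (hS : IsMaxMatchingWeight G w S r) (hT : IsMaxMatchingWeight G w T s)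
    (hST : S ⊆ T) : r ≤ s := by
  obtain ⟨⟨M, hM, rfl⟩, -⟩ := hS
  exact hT.le_of_isMatchingIn (hM.mono hST)

variable [DecidableEq V]

/-- Without the edge `ik` every edge of `G[{i, j, k}]` contains `j`, so a matching is a single
edge of `G[{i, j}]` or of `G[{j, k}]`. -/
theorem eq_max_of_not_adj {i j k : V} {r₁ r₂ : ℝ} (hik : ¬ G.Adj i k)
    (h : IsMaxMatchingWeight G w {i, j, k} r)
    (h₁ : IsMaxMatchingWeight G w {i, j} r₁) (h₂ : IsMaxMatchingWeight G w {j, k} r₂) :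
    r = max r₁ r₂ := by
  refine le_antisymm ?_ (max_le (h₁.le_of_subset h (by grind)) (h₂.le_of_subset h (by grind)))
  obtain ⟨⟨M, hM, rfl⟩, -⟩ := h
  have hedge : ∀ p ∈ M, (p.1 = i ∧ p.2 = j) ∨ (p.1 = j ∧ p.2 = i) ∨
      (p.1 = j ∧ p.2 = k) ∨ (p.1 = k ∧ p.2 = j) := by
    intro p hp
    obtain ⟨hadj, h1, h2⟩ := hM.1 p hp
    have := hadj.ne
    have := fun h : G.Adj k i => hik h.symm
    simp only [mem_insert, mem_singleton] at h1 h2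
    rcases h1 with h1 | h1 | h1 <;> rcases h2 with h2 | h2 | h2 <;> simp_all
  rcases M.eq_empty_or_nonempty with rfl | ⟨p, hp⟩
  · simpa using le_max_of_le_left h₁.nonneg
  have hMp : M = {p} := eq_singleton_iff_unique_mem.mpr
    ⟨hp, fun q hq => hM.subsingleton_of_forall_incident (j := j) (fun q hq => by grind) hq hp⟩
  subst hMp
  rw [sum_singleton]
  have hadj := (hM.1 p hp).1
  rcases hedge p hp with ⟨h1, h2⟩ | ⟨h1, h2⟩ | ⟨h1, h2⟩ | ⟨h1, h2⟩
  · exact le_max_of_le_left (h₁.le_of_adj hadj (by simp [h1]) (by simp [h2]))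
  · exact le_max_of_le_left (h₁.le_of_adj hadj (by simp [h1]) (by simp [h2]))
  · exact le_max_of_le_right (h₂.le_of_adj hadj (by simp [h1]) (by simp [h2]))
  · exact le_max_of_le_right (h₂.le_of_adj hadj (by simp [h1]) (by simp [h2]))

end IsMaxMatchingWeight

namespace IsPMAS

variable {N : Type*} [DecidableEq N] {γ : Finset N → ℝ} {x : Finset N → N → ℝ}

theorem le_marginal (hx : IsPMAS γ x) {S : Finset N} {k : N} (hS : S.Nonempty) (hk : k ∉ S) :
    x (insert k S) k ≤ γ (insert k S) - γ S := by
  have hT := hx.1 (insert k S) (insert_nonempty k S)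
  rw [sum_insert hk] at hT
  have : γ S ≤ ∑ i ∈ S, x (insert k S) i := by
    rw [← hx.1 S hS]
    exact sum_le_sum fun i hi => hx.2 S _ (subset_insert k S) i hi
  linarith

theorem pair_le_marginals (hx : IsPMAS γ x) {i j k l : N} (hik : i ≠ k) (hjk : j ≠ k)
    (hjl : j ≠ l) :
    γ {j, k} ≤ (γ {i, j, k} - γ {i, j}) + (γ {j, k, l} - γ {k, l}) := by
  have hk : x {j, k} k ≤ γ {i, j, k} - γ {i, j} := by
    have hijk : ({i, j, k} : Finset N) = insert k {i, j} := by grind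
    calc x {j, k} k ≤ x {i, j, k} k := hx.2 _ _ (by grind) k (by simp)
      _ ≤ _ := hijk ▸ hx.le_marginal (insert_nonempty _ _) (by grind)
  have hj : x {j, k} j ≤ γ {j, k, l} - γ {k, l} :=
    (hx.2 _ _ (by grind) j (by simp)).trans (hx.le_marginal (insert_nonempty _ _) (by grind))
  have := hx.1 {j, k} (insert_nonempty _ _)
  rw [sum_pair hjk] at this
  linarith

end IsPMAS

theorem lt_and_lt_of_le_max_sub_add_max_sub {a b c : ℝ} (ha : 0 < a) (hb : 0 < b)
    (hc : 0 < c) (h : b ≤ (max a b - a) + (max b c - c)) : a < b ∧ c < b := by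
  rcases max_choice a b with h1 | h1 <;> rcases max_choice b c with h2 | h2 <;>
    rw [h1, h2] at h
  all_goals first
    | exact absurd h (by linarith)
    | exact ⟨by linarith [le_max_right a b], by linarith [le_max_left b c]⟩

theorem matchingGame_P5_C5_free_general {V : Type*} [DecidableEq V]
    (G : SimpleGraph V) (w : V → V → ℝ)
    (hpos : ∀ a b : V, G.Adj a b → 0 < w a b)
    (γ : Finset V → ℝ)
    (hγ : ∀ S : Finset V, IsMaxMatchingWeight G w S (γ S))
    (hpmas : ∃ x : Finset V → V → ℝ, IsPMAS γ x) :
    ¬ ∃ v1 v2 v3 v4 v5 : V,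
      v1 ≠ v2 ∧ v1 ≠ v3 ∧ v1 ≠ v4 ∧ v1 ≠ v5 ∧ v2 ≠ v3 ∧ v2 ≠ v4 ∧ v2 ≠ v5 ∧
      v3 ≠ v4 ∧ v3 ≠ v5 ∧ v4 ≠ v5 ∧
      G.Adj v1 v2 ∧ G.Adj v2 v3 ∧ G.Adj v3 v4 ∧ G.Adj v4 v5 ∧
      ¬ G.Adj v1 v3 ∧ ¬ G.Adj v1 v4 ∧ ¬ G.Adj v2 v4 ∧ ¬ G.Adj v2 v5 ∧ ¬ G.Adj v3 v5 := by
  rintro ⟨v1, v2, v3, v4, v5, -, h13, -, -, h23, h24, -, h34, h35, -,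
    a12, a23, a34, a45, n13, -, n24, -, n35⟩
  obtain ⟨x, hx⟩ := hpmas
  have hpath : ∀ {i j k : V}, ¬ G.Adj i k → γ {i, j, k} = max (γ {i, j}) (γ {j, k}) :=
    fun hik => (hγ _).eq_max_of_not_adj hik (hγ _) (hγ _)
  have hpair_pos : ∀ {i j : V}, G.Adj i j → 0 < γ {i, j} := fun hij =>
    (hpos _ _ hij).trans_le ((hγ _).le_of_adj hij (by simp) (by simp))
  have h234 := hx.pair_le_marginals h13 h23 h24
  have h345 := hx.pair_le_marginals h24 h34 h35
  rw [hpath n13, hpath n24] at h234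
  rw [hpath n24, hpath n35] at h345
  exact lt_asymm
    (lt_and_lt_of_le_max_sub_add_max_sub (hpair_pos a12) (hpair_pos a23) (hpair_pos a34) h234).2
    (lt_and_lt_of_le_max_sub_add_max_sub (hpair_pos a23) (hpair_pos a34) (hpair_pos a45) h345).1

/-- (P₅,C₅)-freeness (Lemma 3.8). -/
theorem matchingGame_P5_C5_free {V : Type*} [Fintype V] [DecidableEq V]
    (G : SimpleGraph V) (w : V → V → ℝ)
    (hsym : ∀ a b : V, w a b = w b a)
    (hpos : ∀ a b : V, G.Adj a b → 0 < w a b)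
    (γ : Finset V → ℝ)
    (hγ : ∀ S : Finset V, IsMaxMatchingWeight G w S (γ S))
    (hpmas : ∃ x : Finset V → V → ℝ, IsPMAS γ x) :
    ¬ ∃ v1 v2 v3 v4 v5 : V,
      v1 ≠ v2 ∧ v1 ≠ v3 ∧ v1 ≠ v4 ∧ v1 ≠ v5 ∧ v2 ≠ v3 ∧ v2 ≠ v4 ∧ v2 ≠ v5 ∧
      v3 ≠ v4 ∧ v3 ≠ v5 ∧ v4 ≠ v5 ∧
      G.Adj v1 v2 ∧ G.Adj v2 v3 ∧ G.Adj v3 v4 ∧ G.Adj v4 v5 ∧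
      ¬ G.Adj v1 v3 ∧ ¬ G.Adj v1 v4 ∧ ¬ G.Adj v2 v4 ∧ ¬ G.Adj v2 v5 ∧ ¬ G.Adj v3 v5 :=
  matchingGame_P5_C5_free_general G w hpos γ hγ hpmas
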